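/- Fix distinct points x_1,…,x_n ∈ ℝ^d, σ = (1/n) Σ_{i=1}^n δ_{x_i}, p ∈ [1,∞), and let M be the set of uniform discrete probability measures on n distinct points of ℝ^d. For each μ ∈ M choose an optimal transport map T^μ from σ to μ (taking T^σ = Id), and define d_{LW^p,σ}(μ_1,μ_2) = ( (1/n) Σ_{j=1}^n |T^{μ_1}(x_j) − T^{μ_2}(x_j)|_p^p )^{1/p}. Then d_{LW^p,σ} is a metric on M: it is nonnegative, symmetric, satisfies the triangle inequality, and d_{LW^p,σ}(μ_1,μ_2) = 0 implies μ_1 = μ_2. -/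
import Mathlib


open MeasureTheory Filter Topology

/-- `∑ i, |v i|^p`, the p-th power of the ℓ^p norm on ℝ^k. -/
noncomputable def lpPow (p : ℝ) {k : ℕ} (v : Fin k → ℝ) : ℝ := ∑ i, |v i| ^ p

/-- `π` is a coupling (transport plan) between `μ` and `ν`. -/
def IsCoupling {α β : Type*} [MeasurableSpace α] [MeasurableSpace β]
    (π : Measure (α × β)) (μ : Measure α) (ν : Measure β) : Prop :=
  π.map Prod.fst = μ ∧ π.map Prod.snd = ν

/-- The Kantorovich optimal transport cost for a cost function `c`. -/
noncomputable def OTCost {α β : Type*} [MeasurableSpace α] [MeasurableSpace β]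
    (c : α → β → ℝ) (μ : Measure α) (ν : Measure β) : ℝ :=
  ⨅ π : {π : Measure (α × β) // IsCoupling π μ ν},
    ∫ z, c z.1 z.2 ∂(π : Measure (α × β))

/-- The p-Wasserstein distance on ℝ^d with ℓ^p ground cost. -/
noncomputable def dWp (p : ℝ) {d : ℕ} (μ ν : Measure (Fin d → ℝ)) : ℝ :=
  (OTCost (fun x y => lpPow p (x - y)) μ ν) ^ (1 / p)

/-- The uniform discrete (empirical) measure `(1/n) ∑ᵢ δ_{x i}`. -/
noncomputable def uniformOn {d n : ℕ} (x : Fin n → (Fin d → ℝ)) : Measure (Fin d → ℝ) :=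
  (n : ENNReal)⁻¹ • ∑ i, Measure.dirac (x i)

/-- The linear Wasserstein distance built from a choice `T` of transport maps from the
reference measure `σ = (1/n) ∑ δ_{x_j}`:
`d_{LW^p,σ}(μ₁,μ₂) = ((1/n) ∑_j |T^{μ₁}(x_j) − T^{μ₂}(x_j)|_p^p)^{1/p}`. -/
noncomputable def dLW (p : ℝ) {d n : ℕ} (x : Fin n → (Fin d → ℝ))
    (T : Measure (Fin d → ℝ) → (Fin d → ℝ) → (Fin d → ℝ))
    (μ₁ μ₂ : Measure (Fin d → ℝ)) : ℝ :=
  ((1 / (n : ℝ)) * ∑ j, lpPow p (T μ₁ (x j) - T μ₂ (x j))) ^ (1 / p)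

lemma lpPow_nonneg (p : ℝ) {k : ℕ} (v : Fin k → ℝ) : 0 ≤ lpPow p v :=
  Finset.sum_nonneg fun _ _ => Real.rpow_nonneg (abs_nonneg _) p

lemma dLW_base_nonneg (p : ℝ) {d n : ℕ} (x : Fin n → (Fin d → ℝ))
    (T : Measure (Fin d → ℝ) → (Fin d → ℝ) → (Fin d → ℝ))
    (μ₁ μ₂ : Measure (Fin d → ℝ)) :
    0 ≤ (1 / (n : ℝ)) * ∑ j, lpPow p (T μ₁ (x j) - T μ₂ (x j)) :=
  mul_nonneg (by positivity) (Finset.sum_nonneg fun _ _ => lpPow_nonneg p _)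


/-- `d_{LW^p,σ}` is a metric on the set `M` of uniform discrete
probability measures on `n` distinct points, given a choice of optimal transport maps
`T^μ` from `σ` (with `T^σ = Id`). -/
theorem linear_wasserstein_is_metric {d : ℕ} (p : ℝ) (hp1 : 1 ≤ p)
    (n : ℕ) (hn : 0 < n) (x : Fin n → (Fin d → ℝ)) (hx : Function.Injective x)
    (T : Measure (Fin d → ℝ) → (Fin d → ℝ) → (Fin d → ℝ))
    (hTσ : T (uniformOn x) = id)
    (hTpush : ∀ μ : Measure (Fin d → ℝ),
      (∃ y : Fin n → (Fin d → ℝ), Function.Injective y ∧ μ = uniformOn y) →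
      (uniformOn x).map (T μ) = μ)
    (hTopt : ∀ μ : Measure (Fin d → ℝ),
      (∃ y : Fin n → (Fin d → ℝ), Function.Injective y ∧ μ = uniformOn y) →
      ∫ z, lpPow p (z - T μ z) ∂(uniformOn x) = dWp p (uniformOn x) μ ^ p) :
    (∀ μ₁ μ₂ : Measure (Fin d → ℝ),
      (∃ y : Fin n → (Fin d → ℝ), Function.Injective y ∧ μ₁ = uniformOn y) →
      (∃ y : Fin n → (Fin d → ℝ), Function.Injective y ∧ μ₂ = uniformOn y) →
      0 ≤ dLW p x T μ₁ μ₂) ∧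
    (∀ μ₁ μ₂ : Measure (Fin d → ℝ),
      (∃ y : Fin n → (Fin d → ℝ), Function.Injective y ∧ μ₁ = uniformOn y) →
      (∃ y : Fin n → (Fin d → ℝ), Function.Injective y ∧ μ₂ = uniformOn y) →
      dLW p x T μ₁ μ₂ = dLW p x T μ₂ μ₁) ∧
    (∀ μ₁ μ₂ μ₃ : Measure (Fin d → ℝ),
      (∃ y : Fin n → (Fin d → ℝ), Function.Injective y ∧ μ₁ = uniformOn y) →
      (∃ y : Fin n → (Fin d → ℝ), Function.Injective y ∧ μ₂ = uniformOn y) →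
      (∃ y : Fin n → (Fin d → ℝ), Function.Injective y ∧ μ₃ = uniformOn y) →
      dLW p x T μ₁ μ₃ ≤ dLW p x T μ₁ μ₂ + dLW p x T μ₂ μ₃) ∧
    (∀ μ₁ μ₂ : Measure (Fin d → ℝ),
      (∃ y : Fin n → (Fin d → ℝ), Function.Injective y ∧ μ₁ = uniformOn y) →
      (∃ y : Fin n → (Fin d → ℝ), Function.Injective y ∧ μ₂ = uniformOn y) →
      dLW p x T μ₁ μ₂ = 0 → μ₁ = μ₂) := by
  have hp0 : 0 < p := lt_of_lt_of_le one_pos hp1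
  refine ⟨?_, ?_, ?_, ?_⟩
  · intro μ₁ μ₂ _ _
    exact Real.rpow_nonneg (dLW_base_nonneg p x T μ₁ μ₂) _
  · intro μ₁ μ₂ _ _
    unfold dLW lpPow
    congr 2
    apply Finset.sum_congr rfl
    intro j _
    apply Finset.sum_congr rfl
    intro i _
    rw [Pi.sub_apply, Pi.sub_apply, abs_sub_comm]
  · intro μ₁ μ₂ μ₃ _ _ _
    unfold dLW lpPow
    -- collapse double sums into sums over Fin n × Fin d
    have hc : ∀ (f g : Fin n → Fin d → ℝ),
        (∑ j, ∑ i, |(f j - g j) i| ^ p)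
          = ∑ z : Fin n × Fin d, |f z.1 z.2 - g z.1 z.2| ^ p := by
      intro f g
      rw [Fintype.sum_prod_type]
      simp [Pi.sub_apply]
    rw [hc, hc, hc]
    have hninv : (0:ℝ) ≤ 1 / (n:ℝ) := by positivity
    set F : Fin n × Fin d → ℝ :=
      fun z => T μ₁ (x z.1) z.2 - T μ₂ (x z.1) z.2 with hF
    set G : Fin n × Fin d → ℝ :=
      fun z => T μ₂ (x z.1) z.2 - T μ₃ (x z.1) z.2 with hG
    have h13 : ∀ z : Fin n × Fin d,
        T μ₁ (x z.1) z.2 - T μ₃ (x z.1) z.2 = F z + G z := by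
      intro z
      show _ = (T μ₁ (x z.1) z.2 - T μ₂ (x z.1) z.2) + (T μ₂ (x z.1) z.2 - T μ₃ (x z.1) z.2)
      ring
    have hFs : (0:ℝ) ≤ ∑ z : Fin n × Fin d, |F z| ^ p :=
      Finset.sum_nonneg fun _ _ => Real.rpow_nonneg (abs_nonneg _) p
    have hGs : (0:ℝ) ≤ ∑ z : Fin n × Fin d, |G z| ^ p :=
      Finset.sum_nonneg fun _ _ => Real.rpow_nonneg (abs_nonneg _) p
    have hFGs : (0:ℝ) ≤ ∑ z : Fin n × Fin d, |F z + G z| ^ p :=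
      Finset.sum_nonneg fun _ _ => Real.rpow_nonneg (abs_nonneg _) p
    calc ((1 / (n:ℝ)) * ∑ z : Fin n × Fin d,
            |T μ₁ (x z.1) z.2 - T μ₃ (x z.1) z.2| ^ p) ^ (1/p)
        = (1 / (n:ℝ)) ^ (1/p) * (∑ z : Fin n × Fin d, |F z + G z| ^ p) ^ (1/p) := by
          rw [← Real.mul_rpow hninv hFGs]
          congr 2
          exact Finset.sum_congr rfl fun z _ => by rw [h13 z]
      _ ≤ (1 / (n:ℝ)) ^ (1/p) *
            ((∑ z : Fin n × Fin d, |F z| ^ p) ^ (1/p)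
              + (∑ z : Fin n × Fin d, |G z| ^ p) ^ (1/p)) := by
          apply mul_le_mul_of_nonneg_left _ (Real.rpow_nonneg hninv _)
          exact Real.Lp_add_le Finset.univ F G hp1
      _ = ((1 / (n:ℝ)) * ∑ z : Fin n × Fin d, |F z| ^ p) ^ (1/p)
            + ((1 / (n:ℝ)) * ∑ z : Fin n × Fin d, |G z| ^ p) ^ (1/p) := by
          rw [mul_add, ← Real.mul_rpow hninv hFs, ← Real.mul_rpow hninv hGs]
  · intro μ₁ μ₂ h₁ h₂ h0
    have hbase : (1 / (n : ℝ)) * ∑ j, lpPow p (T μ₁ (x j) - T μ₂ (x j)) = 0 := by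
      by_contra hne
      have hpos : 0 < (1 / (n : ℝ)) * ∑ j, lpPow p (T μ₁ (x j) - T μ₂ (x j)) :=
        lt_of_le_of_ne (dLW_base_nonneg p x T μ₁ μ₂) (Ne.symm hne)
      have := Real.rpow_pos_of_pos hpos (1/p)
      rw [show ((1 / (n : ℝ)) * ∑ j, lpPow p (T μ₁ (x j) - T μ₂ (x j))) ^ (1/p)
            = dLW p x T μ₁ μ₂ from rfl, h0] at this
      exact lt_irrefl 0 this
    have hsum : ∑ j, lpPow p (T μ₁ (x j) - T μ₂ (x j)) = 0 := by
      have hnne : (1 / (n : ℝ)) ≠ 0 := by positivity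
      exact (mul_eq_zero.mp hbase).resolve_left hnne
    have hjz : ∀ j, T μ₁ (x j) = T μ₂ (x j) := by
      intro j
      have hj : lpPow p (T μ₁ (x j) - T μ₂ (x j)) = 0 := by
        have := (Finset.sum_eq_zero_iff_of_nonneg
          (fun j _ => lpPow_nonneg p _)).mp hsum j (Finset.mem_univ j)
        exact this
      funext i
      have hi : |(T μ₁ (x j) - T μ₂ (x j)) i| ^ p = 0 := by
        have := (Finset.sum_eq_zero_iff_of_nonneg
          (fun i _ => Real.rpow_nonneg (abs_nonneg _) p)).mp hj i (Finset.mem_univ i)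
        exact this
      have habs : |(T μ₁ (x j) - T μ₂ (x j)) i| = 0 := by
        by_contra h
        have : 0 < |(T μ₁ (x j) - T μ₂ (x j)) i| :=
          lt_of_le_of_ne (abs_nonneg _) (Ne.symm h)
        exact absurd hi (ne_of_gt (Real.rpow_pos_of_pos this p))
      have := abs_eq_zero.mp habs
      rw [Pi.sub_apply] at this
      linarith
    -- a.e. membership in the range of x
    have hrange : ∀ᵐ z ∂(uniformOn x), z ∈ Set.range x := by
      rw [ae_iff]
      have hms : MeasurableSet (Set.range x) := (Set.finite_range x).measurableSet
      have : {z | ¬ z ∈ Set.range x} = (Set.range x)ᶜ := rfl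
      rw [this]
      unfold uniformOn
      rw [Measure.smul_apply, Measure.finset_sum_apply]
      have : ∀ i ∈ Finset.univ, Measure.dirac (x i) (Set.range x)ᶜ = 0 := by
        intro i _
        rw [Measure.dirac_apply' _ hms.compl]
        simp [Set.indicator_of_notMem, Set.mem_range_self]
      rw [Finset.sum_eq_zero this]
      simp
    have hae : T μ₁ =ᵐ[uniformOn x] T μ₂ := by
      filter_upwards [hrange] with z hz
      obtain ⟨j, rfl⟩ := hz
      exact hjz j
    calc μ₁ = (uniformOn x).map (T μ₁) := (hTpush μ₁ h₁).symm
      _ = (uniformOn x).map (T μ₂) := Measure.map_congr hae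
      _ = μ₂ := hTpush μ₂ h₂
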